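/- Let μ be a locally finite Borel measure on ℝⁿ and 0 ≤ α < n. Then there exists a dimensional constant C such that for all f ∈ L¹_loc(ℝⁿ), ∫_{ℝⁿ} M_α f dμ ≤ C ∫_{ℝⁿ} Mf(x) · M_α μ(x) dx, where M_α f(x) = sup_{Q ∋ x} ℓ(Q)^α ⨍_Q |f| dy is the fractional maximal function over cubes, and M = M₀ is the Hardy–Littlewood maximal function. -/

import Mathlib

open MeasureTheory
open scoped ENNReal

/-- An axis-parallel (half-open) cube with corner `c` and side length `l`. -/
def cubeOf (n : ℕ) (c : Fin n → ℝ) (l : ℝ) : Set (EuclideanSpace ℝ (Fin n)) :=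
  {y | ∀ i, c i ≤ y i ∧ y i < c i + l}

/-- The fractional maximal function of `f` over cubes:
`M_α f(x) = sup_{Q ∋ x} ℓ(Q)^α ⨍_Q |f|`. -/
noncomputable def cubeFracMaxFn (n : ℕ) (α : ℝ) (f : EuclideanSpace ℝ (Fin n) → ℝ)
    (x : EuclideanSpace ℝ (Fin n)) : ℝ≥0∞ :=
  ⨆ (c : Fin n → ℝ) (l : ℝ) (_ : 0 < l) (_ : x ∈ cubeOf n c l),
    ENNReal.ofReal (l ^ α) * (∫⁻ y in cubeOf n c l, (‖f y‖₊ : ℝ≥0∞))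
      / volume (cubeOf n c l)

/-- The fractional maximal function of a measure over cubes:
`M_α μ(x) = sup_{Q ∋ x} ℓ(Q)^α μ(Q)/ℒ(Q)`. -/
noncomputable def cubeFracMaxMeas (n : ℕ) (α : ℝ)
    (μ : Measure (EuclideanSpace ℝ (Fin n))) (x : EuclideanSpace ℝ (Fin n)) : ℝ≥0∞ :=
  ⨆ (c : Fin n → ℝ) (l : ℝ) (_ : 0 < l) (_ : x ∈ cubeOf n c l),
    ENNReal.ofReal (l ^ α) * μ (cubeOf n c l) / volume (cubeOf n c l)

/-!
By the one-third trick every cube lies in a cube of comparable size from one of `2^n` shifted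
dyadic grids, so it suffices to bound `∫ M_α^𝒟 f dμ` for one grid, with the maximal function
truncated at a top level `K`. Decompose each level set `{M_α^𝒟 f > 2^j}` into maximal cubes `Q`.
The parent of `Q` has average at most `2^j`, so `ℓ(Q)^α ⨍_Q |f| ≤ 2^n 2^j`, and the part `E_Q` of
`Q` where the maximal function stays below `2^(n+1) 2^j` has at least half the measure of `Q`.
On `E_Q` we have `Mf · M_α μ ≥ ⨍_Q |f| · ℓ(Q)^α μ(Q) / ℒ(Q)`, whence
`2^j μ(Q) ≤ 2 ∫_{E_Q} Mf · M_α μ`.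
The sets `E_Q` of one generation `j` are disjoint, and generations `n + 1` apart are disjoint, so
summing over all `Q` and `j` costs a factor `n + 1`. Cubes of the top level have no parent; their
contribution is at most `2 ∫ A_K dμ`, where `A_K` is the level-`K` average, and `∫ A_K dμ` is
bounded by the right-hand side directly.
-/

open Function

section LayerCake

lemma tsum_ite_le_two_zpow (J : ℤ) :
    ∑' j : ℤ, (if j ≤ J then (2 : ℝ≥0∞) ^ j else 0) = 2 ^ (J + 1) := by
  have hsupp : support (fun j : ℤ => if j ≤ J then (2 : ℝ≥0∞) ^ j else 0) ⊆
      Set.range fun i : ℕ => J - i := by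
    intro j hj
    have hjJ : j ≤ J := by by_contra h; simp [h] at hj
    exact ⟨(J - j).toNat, by simp [Int.toNat_of_nonneg (sub_nonneg.mpr hjJ)]⟩
  have hinj : Injective fun i : ℕ => J - i := fun i i' h => by simpa using h
  rw [← hinj.tsum_eq hsupp]
  calc ∑' i : ℕ, (if J - (i : ℤ) ≤ J then (2 : ℝ≥0∞) ^ (J - i) else 0)
      = ∑' i : ℕ, 2 ^ J * 2⁻¹ ^ i := by
        refine tsum_congr fun i => ?_
        rw [if_pos (by omega), ENNReal.zpow_sub two_ne_zero ENNReal.ofNat_ne_top, zpow_natCast,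
          ENNReal.inv_pow]
    _ = 2 ^ (J + 1) := by
        rw [ENNReal.tsum_mul_left, ENNReal.tsum_geometric, ENNReal.one_sub_inv_two, inv_inv,
          ENNReal.zpow_add two_ne_zero ENNReal.ofNat_ne_top, zpow_one]

lemma tsum_two_zpow_lt_eq {c : ℝ≥0∞} {J : ℤ} (hJ : 2 ^ J < c) (hJ' : c ≤ 2 ^ (J + 1)) :
    ∑' j : ℤ, (if (2 : ℝ≥0∞) ^ j < c then (2 : ℝ≥0∞) ^ j else 0) = 2 ^ (J + 1) := by
  rw [← tsum_ite_le_two_zpow J]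
  refine tsum_congr fun j => if_congr ⟨fun h => ?_, fun h => ?_⟩ rfl rfl
  · by_contra hj
    exact (hJ'.trans (ENNReal.zpow_le_of_le one_le_two (by omega))).not_gt h
  · exact (ENNReal.zpow_le_of_le one_le_two h).trans_lt hJ

lemma le_tsum_two_zpow_lt (c : ℝ≥0∞) :
    c ≤ ∑' j : ℤ, if (2 : ℝ≥0∞) ^ j < c then (2 : ℝ≥0∞) ^ j else 0 := by
  rcases eq_or_ne c 0 with rfl | hc0
  · exact zero_le
  rcases eq_or_ne c ⊤ with rfl | hctop
  · simp only [ENNReal.zpow_lt_top two_ne_zero ENNReal.ofNat_ne_top, if_true]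
    calc ⊤ = ∑' _ : ℕ, (1 : ℝ≥0∞) := (ENNReal.tsum_const_eq_top_of_ne_zero one_ne_zero).symm
      _ ≤ ∑' i : ℕ, (2 : ℝ≥0∞) ^ (i : ℤ) :=
        ENNReal.tsum_le_tsum fun i => by simpa using one_le_pow₀ (M₀ := ℝ≥0∞) one_le_two
      _ ≤ ∑' j : ℤ, (2 : ℝ≥0∞) ^ j :=
        ENNReal.tsum_comp_le_tsum_of_injective Nat.cast_injective _
  obtain ⟨J, hJ, hJ'⟩ :=
    ENNReal.exists_mem_Ioc_zpow hc0 hctop ENNReal.one_lt_two ENNReal.ofNat_ne_top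
  rw [tsum_two_zpow_lt_eq hJ hJ']
  exact hJ'

lemma tsum_two_zpow_lt_le (c : ℝ≥0∞) :
    ∑' j : ℤ, (if (2 : ℝ≥0∞) ^ j < c then (2 : ℝ≥0∞) ^ j else 0) ≤ 2 * c := by
  rcases eq_or_ne c 0 with rfl | hc0
  · simp
  rcases eq_or_ne c ⊤ with rfl | hctop
  · simp
  obtain ⟨J, hJ, hJ'⟩ :=
    ENNReal.exists_mem_Ioc_zpow hc0 hctop ENNReal.one_lt_two ENNReal.ofNat_ne_top
  rw [tsum_two_zpow_lt_eq hJ hJ', ENNReal.zpow_add two_ne_zero ENNReal.ofNat_ne_top, zpow_one,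
    mul_comm]
  gcongr

variable {X : Type*} [MeasurableSpace X] {μ : Measure X} {g : X → ℝ≥0∞}

lemma tsum_two_zpow_mul_measure_lt_eq (hg : Measurable g) :
    ∑' j : ℤ, 2 ^ j * μ {x | 2 ^ j < g x} =
      ∫⁻ x, ∑' j : ℤ, (if (2 : ℝ≥0∞) ^ j < g x then (2 : ℝ≥0∞) ^ j else 0) ∂μ := by
  have hset : ∀ j : ℤ, MeasurableSet {x | (2 : ℝ≥0∞) ^ j < g x} :=
    fun j => measurableSet_lt measurable_const hg
  rw [lintegral_tsum fun j =>
    (Measurable.ite (hset j) measurable_const measurable_const).aemeasurable]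
  refine tsum_congr fun j => ?_
  rw [← lintegral_indicator_const (hset j)]
  simp only [Set.indicator_apply, Set.mem_ofPred_eq]

lemma lintegral_le_tsum_two_zpow_mul_measure (hg : Measurable g) :
    ∫⁻ x, g x ∂μ ≤ ∑' j : ℤ, 2 ^ j * μ {x | 2 ^ j < g x} := by
  rw [tsum_two_zpow_mul_measure_lt_eq hg]
  exact lintegral_mono fun x => le_tsum_two_zpow_lt (g x)

lemma tsum_two_zpow_mul_measure_le (hg : Measurable g) :
    ∑' j : ℤ, 2 ^ j * μ {x | 2 ^ j < g x} ≤ 2 * ∫⁻ x, g x ∂μ := by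
  rw [tsum_two_zpow_mul_measure_lt_eq hg, ← lintegral_const_mul _ hg]
  exact lintegral_mono fun x => tsum_two_zpow_lt_le (g x)

end LayerCake

/-- Splitting `ℤ` into residue classes mod `N` avoids any measurability assumption on `g`. -/
lemma tsum_setLIntegral_le_of_disjoint {X : Type*} [MeasurableSpace X] {ν : Measure X}
    {S : ℤ → Set X} (N : ℕ) [NeZero N] (hS : ∀ j, MeasurableSet (S j))
    (hdisj : ∀ j j' : ℤ, j + N ≤ j' → Disjoint (S j) (S j')) (g : X → ℝ≥0∞) :
    ∑' j, ∫⁻ x in S j, g x ∂ν ≤ N * ∫⁻ x, g x ∂ν := by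
  have hclass : ∀ r : Fin N, ∑' q : ℤ, ∫⁻ x in S (q * N + r), g x ∂ν ≤ ∫⁻ x, g x ∂ν := by
    intro r
    have hpair : Pairwise (Disjoint on fun q : ℤ => S (q * N + r)) :=
      (pairwise_disjoint_on _).mpr fun q q' hq => hdisj _ _ (by nlinarith)
    rw [← lintegral_iUnion (fun q => hS _) hpair]
    exact setLIntegral_le_lintegral _ _
  calc ∑' j, ∫⁻ x in S j, g x ∂ν
      = ∑' p : ℤ × Fin N, ∫⁻ x in S (p.1 * N + p.2), g x ∂ν :=
        ((Int.divModEquiv N).symm.tsum_eq fun j => ∫⁻ x in S j, g x ∂ν).symm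
    _ = ∑ r : Fin N, ∑' q : ℤ, ∫⁻ x in S (q * N + r), g x ∂ν := by
        rw [ENNReal.tsum_prod (f := fun q (r : Fin N) => ∫⁻ x in S (q * N + r), g x ∂ν),
          ENNReal.tsum_comm, tsum_fintype]
    _ ≤ ∑ _r : Fin N, ∫⁻ x, g x ∂ν := Finset.sum_le_sum fun r _ => hclass r
    _ = N * ∫⁻ x, g x ∂ν := by simp

section CubeAverages

variable {n : ℕ}

lemma volume_cubeOf (c : Fin n → ℝ) (l : ℝ) :
    volume (cubeOf n c l) = ENNReal.ofReal l ^ n := by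
  have hpre : cubeOf n c l =
      (MeasurableEquiv.toLp 2 (Fin n → ℝ)).symm ⁻¹'
        Set.univ.pi fun i => Set.Ico (c i) (c i + l) := by
    ext y
    simp [cubeOf, Set.mem_pi, Set.mem_Ico]
  rw [hpre, (EuclideanSpace.volume_preserving_symm_measurableEquiv_toLp (Fin n)).measure_preimage
    (MeasurableSet.univ_pi fun i => measurableSet_Ico).nullMeasurableSet, volume_pi_pi]
  simp [Real.volume_Ico]

variable (α : ℝ) (f : EuclideanSpace ℝ (Fin n) → ℝ) (μ : Measure (EuclideanSpace ℝ (Fin n)))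

/-- On `E ⊆ Q` the integrand is at least `⨍_Q |f| · ℓ(Q)^α μ(Q) / ℒ(Q)`. -/
lemma cubeFracAvg_mul_measure_le {c : Fin n → ℝ} {l : ℝ} (hl : 0 < l)
    {E : Set (EuclideanSpace ℝ (Fin n))} (hE : MeasurableSet E) (hEQ : E ⊆ cubeOf n c l)
    {C : ℝ≥0∞} (hC : volume (cubeOf n c l) ≤ C * volume E) :
    ENNReal.ofReal (l ^ α) * (∫⁻ y in cubeOf n c l, (‖f y‖₊ : ℝ≥0∞)) / volume (cubeOf n c l) *
        μ (cubeOf n c l) ≤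
      C * ∫⁻ y in E, cubeFracMaxFn n 0 f y * cubeFracMaxMeas n α μ y := by
  set Q := cubeOf n c l
  set I := ∫⁻ y in Q, (‖f y‖₊ : ℝ≥0∞)
  set u := I / volume Q
  set v := ENNReal.ofReal (l ^ α) * μ Q / volume Q
  have hQ0 : volume Q ≠ 0 := by simp [Q, volume_cubeOf, hl]
  have hQtop : volume Q ≠ ⊤ := by simp [Q, volume_cubeOf]
  have hu : ∀ y ∈ Q, u ≤ cubeFracMaxFn n 0 f y := fun y hy =>
    le_iSup₂_of_le c l <| le_iSup₂_of_le (f := fun _ _ => _) hl hy <| by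
      rw [Real.rpow_zero, ENNReal.ofReal_one, one_mul]
  have hv : ∀ y ∈ Q, v ≤ cubeFracMaxMeas n α μ y := fun y hy =>
    le_iSup₂_of_le c l <| le_iSup₂_of_le (f := fun _ _ => _) hl hy le_rfl
  calc ENNReal.ofReal (l ^ α) * I / volume Q * μ Q
      = u * (ENNReal.ofReal (l ^ α) * μ Q) * ((volume Q)⁻¹ * volume Q) := by
        rw [ENNReal.inv_mul_cancel hQ0 hQtop, mul_one]; simp only [u, div_eq_mul_inv]; ring
    _ = u * v * volume Q := by simp only [v, div_eq_mul_inv]; ring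
    _ ≤ u * v * (C * volume E) := by gcongr
    _ = C * ∫⁻ _ in E, u * v := by rw [setLIntegral_const]; ring
    _ ≤ C * ∫⁻ y in E, cubeFracMaxFn n 0 f y * cubeFracMaxMeas n α μ y := by
        refine mul_le_mul_right (setLIntegral_mono_ae' hE (ae_of_all _ fun y hy => ?_)) C
        exact mul_le_mul' (hu y (hEQ hy)) (hv y (hEQ hy))

end CubeAverages

namespace ShiftedDyadic

/-- The level-`k` grid on the line is `2^k ℤ + gridShift b k`. The sign alternation of the shift
`(-1)^k 2^k / 3` is what makes consecutive levels of the shifted grid nested. -/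
noncomputable def gridShift (b : Bool) (k : ℤ) : ℝ := if b then (-1 : ℝ) ^ k * 2 ^ k / 3 else 0

noncomputable def dyadicIndex (b : Bool) (k : ℤ) (v : ℝ) : ℤ := ⌊(v - gridShift b k) / 2 ^ k⌋

@[simp] lemma gridShift_false (k : ℤ) : gridShift false k = 0 := rfl

lemma two_zpow_pos (k : ℤ) : (0 : ℝ) < 2 ^ k := zpow_pos two_pos k

lemma dyadicIndex_eq_iff {b : Bool} {k : ℤ} {v : ℝ} {m : ℤ} :
    dyadicIndex b k v = m ↔
      2 ^ k * m + gridShift b k ≤ v ∧ v < 2 ^ k * m + gridShift b k + 2 ^ k := by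
  have h := two_zpow_pos k
  rw [dyadicIndex, Int.floor_eq_iff, le_div_iff₀ h, div_lt_iff₀ h]
  constructor <;> rintro ⟨h₁, h₂⟩ <;> constructor <;> linarith

lemma exists_gridShift_succ (b : Bool) (k : ℤ) :
    ∃ e : ℤ, gridShift b (k + 1) = gridShift b k - 2 ^ k * e := by
  cases b
  · exact ⟨0, by simp [gridShift]⟩
  have hk : (2 : ℝ) ^ (k + 1) = 2 * 2 ^ k := by rw [zpow_add_one₀ two_ne_zero]; ring
  have hs : (-1 : ℝ) ^ (k + 1) = -(-1) ^ k := by rw [zpow_add_one₀ (by norm_num)]; ring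
  rcases Int.even_or_odd k with he | ho
  · exact ⟨1, by simp only [gridShift, if_true, hk, hs, he.neg_one_zpow]; push_cast; ring⟩
  · exact ⟨-1, by simp only [gridShift, if_true, hk, hs, ho.neg_one_zpow]; push_cast; ring⟩

lemma exists_dyadicIndex_succ (b : Bool) (k : ℤ) :
    ∃ e : ℤ, ∀ v, dyadicIndex b (k + 1) v = (dyadicIndex b k v + e) / 2 := by
  obtain ⟨e, he⟩ := exists_gridShift_succ b k
  refine ⟨e, fun v => ?_⟩
  have : (v - gridShift b (k + 1)) / 2 ^ (k + 1) = ((v - gridShift b k) / 2 ^ k + e) / (2 : ℕ) := by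
    rw [he, zpow_add_one₀ two_ne_zero]
    field_simp
    push_cast
    ring
  rw [dyadicIndex, this, Int.floor_div_natCast, Int.floor_add_intCast, dyadicIndex]
  rfl

lemma dyadicIndex_eq_of_le {b : Bool} {k k' : ℤ} (hk : k ≤ k') {v w : ℝ}
    (h : dyadicIndex b k v = dyadicIndex b k w) : dyadicIndex b k' v = dyadicIndex b k' w := by
  induction k', hk using Int.leInduction with
  | base => exact h
  | succ k' _ ih =>
    obtain ⟨e, he⟩ := exists_dyadicIndex_succ b k'
    rw [he, he, ih]

lemma le_abs_sub_gridShift (k m m' : ℤ) :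
    (2 : ℝ) ^ k / 3 ≤ |2 ^ k * m - (2 ^ k * m' + gridShift true k)| := by
  have key : ∀ s : ℤ, (s = 1 ∨ s = -1) →
      (2 : ℝ) ^ k / 3 ≤ |(2 : ℝ) ^ k * (3 * ((m : ℝ) - m') - s) / 3| := by
    rintro s hs
    have h1 : (1 : ℝ) ≤ |3 * ((m : ℝ) - m') - s| := by
      exact_mod_cast Int.one_le_abs (by omega)
    rw [abs_div, abs_mul, abs_of_pos (two_zpow_pos k), abs_of_pos (by norm_num : (0 : ℝ) < 3)]
    gcongr
    simpa using mul_le_mul_of_nonneg_left h1 (two_zpow_pos k).le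
  rcases Int.even_or_odd k with he | ho
  · convert key 1 (by simp) using 2
    simp only [gridShift, if_true, he.neg_one_zpow]; push_cast; ring
  · convert key (-1) (by simp) using 2
    simp only [gridShift, if_true, ho.neg_one_zpow]; push_cast; ring

/-- The one-third trick on the line. -/
lemma exists_dyadicIndex_eq_of_mem_Ico {a l : ℝ} {k : ℤ} (h : 3 * l ≤ 2 ^ k) :
    ∃ b, ∀ y ∈ Set.Ico a (a + l), dyadicIndex b k y = dyadicIndex b k a := by
  set next : Bool → ℝ := fun b => 2 ^ k * dyadicIndex b k a + gridShift b k + 2 ^ k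
  have hnext : ∀ b, a < next b := fun b => (dyadicIndex_eq_iff.mp rfl).2
  by_cases hfit : ∃ b, a + l ≤ next b
  · obtain ⟨b, hb⟩ := hfit
    refine ⟨b, fun y hy => dyadicIndex_eq_iff.mpr ⟨?_, ?_⟩⟩
    · exact (dyadicIndex_eq_iff.mp rfl).1.trans hy.1
    · exact hy.2.trans_le hb
  push Not at hfit
  have hnear : |next false - next true| < l := by
    rw [abs_lt]; constructor <;> linarith [hnext false, hnext true, hfit false, hfit true]
  have hfar : 2 ^ k / 3 ≤ |next false - next true| := by
    convert le_abs_sub_gridShift k (dyadicIndex false k a) (dyadicIndex true k a) using 2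
    simp only [next, gridShift_false]
    ring
  linarith

variable {n : ℕ}

/-- `t i` selects the unshifted or the shifted grid in the `i`-th coordinate. -/
noncomputable def gridIndex (t : Fin n → Bool) (k : ℤ) (x : EuclideanSpace ℝ (Fin n)) :
    Fin n → ℤ :=
  fun i => dyadicIndex (t i) k (x i)

def gridCube (t : Fin n → Bool) (k : ℤ) (m : Fin n → ℤ) : Set (EuclideanSpace ℝ (Fin n)) :=
  {y | gridIndex t k y = m}

variable {t : Fin n → Bool} {k k' : ℤ} {m m' : Fin n → ℤ} {x y : EuclideanSpace ℝ (Fin n)}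

@[simp] lemma mem_gridCube : y ∈ gridCube t k m ↔ gridIndex t k y = m := Iff.rfl

lemma mem_gridCube_gridIndex (t : Fin n → Bool) (k : ℤ) (x : EuclideanSpace ℝ (Fin n)) :
    x ∈ gridCube t k (gridIndex t k x) := rfl

lemma gridIndex_eq_of_le (hk : k ≤ k') (h : gridIndex t k x = gridIndex t k y) :
    gridIndex t k' x = gridIndex t k' y :=
  funext fun i => dyadicIndex_eq_of_le hk (congrFun h i)

lemma gridCube_subset_gridCube (hk : k ≤ k') (hx : x ∈ gridCube t k m)
    (hx' : x ∈ gridCube t k' m') : gridCube t k m ⊆ gridCube t k' m' :=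
  fun _ hy => (gridIndex_eq_of_le hk (hy.trans hx.symm)).trans hx'

lemma gridCube_eq_cubeOf (t : Fin n → Bool) (k : ℤ) (m : Fin n → ℤ) :
    gridCube t k m = cubeOf n (fun i => 2 ^ k * m i + gridShift (t i) k) (2 ^ k) := by
  ext y
  rw [mem_gridCube, funext_iff]
  exact forall_congr' fun i => dyadicIndex_eq_iff

lemma measurable_gridIndex (t : Fin n → Bool) (k : ℤ) : Measurable (gridIndex (n := n) t k) :=
  measurable_pi_lambda _ fun _ => Measurable.floor (by fun_prop)

lemma measurableSet_gridCube (t : Fin n → Bool) (k : ℤ) (m : Fin n → ℤ) :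
    MeasurableSet (gridCube t k m) :=
  measurable_gridIndex t k (measurableSet_singleton m)

lemma volume_gridCube (t : Fin n → Bool) (k : ℤ) (m : Fin n → ℤ) :
    volume (gridCube t k m) = ENNReal.ofReal (2 ^ k) ^ n := by
  rw [gridCube_eq_cubeOf, volume_cubeOf]

lemma volume_gridCube_ne_zero (t : Fin n → Bool) (k : ℤ) (m : Fin n → ℤ) :
    volume (gridCube t k m) ≠ 0 := by
  simp [volume_gridCube, two_zpow_pos]

lemma volume_gridCube_ne_top (t : Fin n → Bool) (k : ℤ) (m : Fin n → ℤ) :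
    volume (gridCube t k m) ≠ ⊤ := by
  simp [volume_gridCube]

lemma gridCube_nonempty (t : Fin n → Bool) (k : ℤ) (m : Fin n → ℤ) : (gridCube t k m).Nonempty := by
  refine ⟨WithLp.toLp 2 fun i => 2 ^ k * m i + gridShift (t i) k, ?_⟩
  simp [gridCube_eq_cubeOf, cubeOf, two_zpow_pos]

lemma pairwise_disjoint_gridCube (t : Fin n → Bool) (k : ℤ) :
    Pairwise (Disjoint on gridCube t k) :=
  fun _ _ hne => Set.disjoint_left.mpr fun _ h h' => hne (h.symm.trans h')

lemma iUnion_gridCube (t : Fin n → Bool) (k : ℤ) : ⋃ m, gridCube t k m = Set.univ :=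
  Set.eq_univ_of_forall fun x => Set.mem_iUnion.mpr ⟨_, mem_gridCube_gridIndex t k x⟩

lemma lintegral_eq_tsum_gridCube (ν : Measure (EuclideanSpace ℝ (Fin n)))
    (g : EuclideanSpace ℝ (Fin n) → ℝ≥0∞) (t : Fin n → Bool) (k : ℤ) :
    ∫⁻ x, g x ∂ν = ∑' m, ∫⁻ x in gridCube t k m, g x ∂ν := by
  rw [← lintegral_iUnion (measurableSet_gridCube t k) (pairwise_disjoint_gridCube t k),
    iUnion_gridCube, Measure.restrict_univ]

lemma exists_cubeOf_subset_gridCube {c : Fin n → ℝ} {l : ℝ} (hl : 0 < l) (hx : x ∈ cubeOf n c l) :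
    ∃ (t : Fin n → Bool) (k : ℤ), 3 * l ≤ 2 ^ k ∧ (2 : ℝ) ^ k ≤ 6 * l ∧
      cubeOf n c l ⊆ gridCube t k (gridIndex t k x) := by
  obtain ⟨k, hk₁, hk₂⟩ := exists_mem_Ico_zpow (by positivity : (0 : ℝ) < 3 * l) one_lt_two
  rw [zpow_add_one₀ two_ne_zero] at hk₂
  choose t ht using fun i => exists_dyadicIndex_eq_of_mem_Ico (a := c i) (l := l) (k := k + 1)
    (by rw [zpow_add_one₀ two_ne_zero]; linarith)
  refine ⟨t, k + 1, by rw [zpow_add_one₀ two_ne_zero]; linarith,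
    by rw [zpow_add_one₀ two_ne_zero]; linarith, fun y hy => funext fun i => ?_⟩
  exact (ht i (y i) (hy i)).trans (ht i (x i) (hx i)).symm

noncomputable def gridFracAvg (α : ℝ) (f : EuclideanSpace ℝ (Fin n) → ℝ) (t : Fin n → Bool) (k : ℤ)
    (m : Fin n → ℤ) : ℝ≥0∞ :=
  ENNReal.ofReal ((2 ^ k) ^ α) * (∫⁻ y in gridCube t k m, (‖f y‖₊ : ℝ≥0∞)) /
    volume (gridCube t k m)

noncomputable def truncGridFracMax (α : ℝ) (f : EuclideanSpace ℝ (Fin n) → ℝ) (t : Fin n → Bool)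
    (K : ℤ) (x : EuclideanSpace ℝ (Fin n)) : ℝ≥0∞ :=
  ⨆ (k : ℤ) (_ : k ≤ K), gridFracAvg α f t k (gridIndex t k x)

noncomputable def gridFracMax (α : ℝ) (f : EuclideanSpace ℝ (Fin n) → ℝ) (t : Fin n → Bool)
    (x : EuclideanSpace ℝ (Fin n)) : ℝ≥0∞ :=
  ⨆ k : ℤ, gridFracAvg α f t k (gridIndex t k x)

section GridAverages

variable {α : ℝ} {f : EuclideanSpace ℝ (Fin n) → ℝ} {μ : Measure (EuclideanSpace ℝ (Fin n))}
  {K : ℤ}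

lemma gridFracAvg_mul_measure_le {E : Set (EuclideanSpace ℝ (Fin n))} (hE : MeasurableSet E)
    (hEQ : E ⊆ gridCube t k m) {C : ℝ≥0∞} (hC : volume (gridCube t k m) ≤ C * volume E) :
    gridFracAvg α f t k m * μ (gridCube t k m) ≤
      C * ∫⁻ y in E, cubeFracMaxFn n 0 f y * cubeFracMaxMeas n α μ y := by
  rw [gridCube_eq_cubeOf] at hEQ hC
  rw [gridFracAvg, gridCube_eq_cubeOf]
  exact cubeFracAvg_mul_measure_le α f μ (two_zpow_pos k) hE hEQ hC

lemma gridFracAvg_mul_volume (α : ℝ) (f : EuclideanSpace ℝ (Fin n) → ℝ) (t : Fin n → Bool) (k : ℤ)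
    (m : Fin n → ℤ) :
    gridFracAvg α f t k m * volume (gridCube t k m) =
      ENNReal.ofReal ((2 ^ k) ^ α) * ∫⁻ y in gridCube t k m, (‖f y‖₊ : ℝ≥0∞) :=
  ENNReal.div_mul_cancel (volume_gridCube_ne_zero t k m) (volume_gridCube_ne_top t k m)

lemma gridFracAvg_le_two_pow_mul_parent (hα : 0 ≤ α) (hy : y ∈ gridCube t k m) :
    gridFracAvg α f t k m ≤ 2 ^ n * gridFracAvg α f t (k + 1) (gridIndex t (k + 1) y) := by
  set Q' := gridCube t (k + 1) (gridIndex t (k + 1) y)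
  have hvol : volume Q' = 2 ^ n * volume (gridCube t k m) := by
    simp only [Q', volume_gridCube, zpow_add_one₀ (two_ne_zero' ℝ), ← mul_pow]
    rw [ENNReal.ofReal_mul (two_zpow_pos k).le, ENNReal.ofReal_ofNat, mul_comm]
  have hside : ENNReal.ofReal ((2 ^ k) ^ α) ≤ ENNReal.ofReal (((2 : ℝ) ^ (k + 1)) ^ α) :=
    ENNReal.ofReal_le_ofReal <| Real.rpow_le_rpow (two_zpow_pos k).le
      (zpow_le_zpow_right₀ one_le_two (Int.le_add_one le_rfl)) hα
  calc gridFracAvg α f t k m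
      ≤ ENNReal.ofReal (((2 : ℝ) ^ (k + 1)) ^ α) * (∫⁻ y in Q', (‖f y‖₊ : ℝ≥0∞)) /
          volume (gridCube t k m) :=
        ENNReal.div_le_div_right (mul_le_mul' hside
          (lintegral_mono_set (gridCube_subset_gridCube (Int.le_add_one le_rfl) hy
            (mem_gridCube_gridIndex t _ y)))) _
    _ = 2 ^ n * (ENNReal.ofReal (((2 : ℝ) ^ (k + 1)) ^ α) * ∫⁻ y in Q', (‖f y‖₊ : ℝ≥0∞)) /
          volume Q' := by
        rw [hvol, ENNReal.mul_div_mul_left _ _ (by simp) (by simp)]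
    _ = 2 ^ n * gridFracAvg α f t (k + 1) (gridIndex t (k + 1) y) := by
        rw [mul_div_assoc, gridFracAvg]

lemma measurable_gridFracAvg_gridIndex (α : ℝ) (f : EuclideanSpace ℝ (Fin n) → ℝ)
    (t : Fin n → Bool) (k : ℤ) : Measurable fun x => gridFracAvg α f t k (gridIndex t k x) :=
  (measurable_of_countable (gridFracAvg α f t k)).comp (measurable_gridIndex t k)

lemma measurable_truncGridFracMax (α : ℝ) (f : EuclideanSpace ℝ (Fin n) → ℝ) (t : Fin n → Bool)
    (K : ℤ) : Measurable (truncGridFracMax α f t K) :=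
  .iSup fun k => .iSup fun _ => measurable_gridFracAvg_gridIndex α f t k

lemma measurable_gridFracMax (α : ℝ) (f : EuclideanSpace ℝ (Fin n) → ℝ) (t : Fin n → Bool) :
    Measurable (gridFracMax α f t) :=
  .iSup fun k => measurable_gridFracAvg_gridIndex α f t k

lemma gridFracAvg_le_truncGridFracMax (hk : k ≤ K) (hy : y ∈ gridCube t k m) :
    gridFracAvg α f t k m ≤ truncGridFracMax α f t K y :=
  le_iSup₂_of_le (f := fun k _ => gridFracAvg α f t k (gridIndex t k y)) k hk (by rw [hy])

lemma monotone_truncGridFracMax : Monotone (truncGridFracMax α f t) :=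
  fun _ _ hK _ => iSup₂_mono' fun k hk => ⟨k, hk.trans hK, le_rfl⟩

lemma gridFracMax_eq_iSup_truncGridFracMax (x : EuclideanSpace ℝ (Fin n)) :
    gridFracMax α f t x = ⨆ K : ℕ, truncGridFracMax α f t K x := by
  refine le_antisymm (iSup_le fun k => le_iSup_of_le k.toNat ?_) (iSup_le fun K => iSup₂_le
    fun k _ => le_iSup (fun k => gridFracAvg α f t k (gridIndex t k x)) k)
  exact gridFracAvg_le_truncGridFracMax (Int.self_le_toNat k) (mem_gridCube_gridIndex t k x)

lemma cubeFracMaxFn_le_sum_gridFracMax (hα : 0 ≤ α) (x : EuclideanSpace ℝ (Fin n)) :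
    cubeFracMaxFn n α f x ≤ 6 ^ n * ∑ t, gridFracMax α f t x := by
  refine iSup₂_le fun c l => iSup₂_le fun hl hx => ?_
  obtain ⟨t, k, h3l, h6l, hsub⟩ := exists_cubeOf_subset_gridCube hl hx
  set R := gridCube t k (gridIndex t k x)
  have hvol : volume R ≤ 6 ^ n * volume (cubeOf n c l) := by
    rw [volume_gridCube, volume_cubeOf, ← ENNReal.ofReal_ofNat 6, ← mul_pow,
      ← ENNReal.ofReal_mul (by norm_num)]
    gcongr
  calc ENNReal.ofReal (l ^ α) * (∫⁻ y in cubeOf n c l, (‖f y‖₊ : ℝ≥0∞)) / volume (cubeOf n c l)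
      ≤ 6 ^ n * (ENNReal.ofReal ((2 ^ k) ^ α) * ∫⁻ y in R, (‖f y‖₊ : ℝ≥0∞)) /
          (6 ^ n * volume (cubeOf n c l)) := by
        rw [ENNReal.mul_div_mul_left _ _ (by simp) (by simp)]
        gcongr
        linarith
    _ ≤ 6 ^ n * gridFracAvg α f t k (gridIndex t k x) := by
        rw [gridFracAvg, mul_div_assoc]
        gcongr
    _ ≤ 6 ^ n * ∑ t, gridFracMax α f t x := by
        gcongr
        exact (le_iSup (fun k => gridFracAvg α f t k (gridIndex t k x)) k).trans
          (Finset.single_le_sum (f := fun t => gridFracMax α f t x) (by simp) (Finset.mem_univ t))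

end GridAverages

/-- The Calderón–Zygmund cubes of `{x | s < truncGridFracMax α f t K x}` below the top level `K`. -/
def IsStoppingCube (α : ℝ) (f : EuclideanSpace ℝ (Fin n) → ℝ) (t : Fin n → Bool) (K : ℤ)
    (s : ℝ≥0∞) (k : ℤ) (m : Fin n → ℤ) : Prop :=
  k < K ∧ s < gridFracAvg α f t k m ∧
    ∀ y ∈ gridCube t k m, ∀ k', k < k' → k' ≤ K → gridFracAvg α f t k' (gridIndex t k' y) ≤ s

section Stopping

variable {α : ℝ} {f : EuclideanSpace ℝ (Fin n) → ℝ} {K : ℤ} {s : ℝ≥0∞}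

lemma IsStoppingCube.subset_setOf_lt (h : IsStoppingCube α f t K s k m) :
    gridCube t k m ⊆ {x | s < truncGridFracMax α f t K x} :=
  fun _ hy => h.2.1.trans_le (gridFracAvg_le_truncGridFracMax h.1.le hy)

lemma IsStoppingCube.eq_of_mem (h : IsStoppingCube α f t K s k m)
    (h' : IsStoppingCube α f t K s k' m') (hy : y ∈ gridCube t k m) (hy' : y ∈ gridCube t k' m') :
    k = k' ∧ m = m' := by
  rcases lt_trichotomy k k' with hlt | rfl | hlt
  · exact absurd (h.2.2 y hy k' hlt h'.1.le) (by rw [hy']; exact h'.2.1.not_ge)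
  · exact ⟨rfl, hy.symm.trans hy'⟩
  · exact absurd (h'.2.2 y hy' k hlt h.1.le) (by rw [hy]; exact h.2.1.not_ge)

lemma pairwise_disjoint_stoppingCube (α : ℝ) (f : EuclideanSpace ℝ (Fin n) → ℝ)
    (t : Fin n → Bool) (K : ℤ) (s : ℝ≥0∞) :
    Pairwise (Disjoint on fun p : {p : ℤ × (Fin n → ℤ) // IsStoppingCube α f t K s p.1 p.2} =>
      gridCube t p.1.1 p.1.2) := by
  rintro ⟨⟨k, m⟩, h⟩ ⟨⟨k', m'⟩, h'⟩ hne
  refine Set.disjoint_left.mpr fun y hy hy' => hne ?_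
  obtain ⟨rfl, rfl⟩ := h.eq_of_mem h' hy hy'
  rfl

lemma setOf_lt_truncGridFracMax_subset (α : ℝ) (f : EuclideanSpace ℝ (Fin n) → ℝ)
    (t : Fin n → Bool) (K : ℤ) (s : ℝ≥0∞) :
    {x | s < truncGridFracMax α f t K x} ⊆ {x | s < gridFracAvg α f t K (gridIndex t K x)} ∪
      ⋃ p : {p : ℤ × (Fin n → ℤ) // IsStoppingCube α f t K s p.1 p.2}, gridCube t p.1.1 p.1.2 := by
  intro x hx
  simp only [Set.mem_ofPred_eq, truncGridFracMax, lt_iSup_iff] at hx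
  obtain ⟨k₀, hk₀K, hk₀⟩ := hx
  obtain ⟨k, ⟨hkK, hk⟩, hmax⟩ := Int.exists_greatest_of_bdd
    (P := fun k => k ≤ K ∧ s < gridFracAvg α f t k (gridIndex t k x))
    ⟨K, fun _ h => h.1⟩ ⟨k₀, hk₀K, hk₀⟩
  rcases hkK.lt_or_eq with hkK | rfl
  · refine Or.inr (Set.mem_iUnion.mpr ⟨⟨(k, gridIndex t k x), hkK, hk, fun y hy k' hkk' hk'K => ?_⟩,
      mem_gridCube_gridIndex t k x⟩)
    rw [gridIndex_eq_of_le hkk'.le hy]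
    exact not_lt.mp fun h => (hmax k' ⟨hk'K, h⟩).not_gt hkk'
  · exact Or.inl hk

lemma IsStoppingCube.gridFracAvg_le (hα : 0 ≤ α) (h : IsStoppingCube α f t K s k m) :
    gridFracAvg α f t k m ≤ 2 ^ n * s := by
  obtain ⟨y, hy⟩ := gridCube_nonempty t k m
  exact (gridFracAvg_le_two_pow_mul_parent hα hy).trans
    (by gcongr; exact h.2.2 y hy _ (by omega) h.1)

lemma IsStoppingCube.lt_of_mem (h : IsStoppingCube α f t K s k' m')
    (hQ : ∀ y ∈ gridCube t k m, ∀ k'', k ≤ k'' → k'' ≤ K →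
      gridFracAvg α f t k'' (gridIndex t k'' y) ≤ s)
    (hy : y ∈ gridCube t k m) (hy' : y ∈ gridCube t k' m') : k' < k := by
  by_contra! hk
  exact (hQ y hy k' hk h.1.le).not_gt (by rw [hy']; exact h.2.1)

/-- Weak-type estimate for the truncated maximal function localised to a cube. -/
lemma mul_volume_inter_setOf_lt_le (hα : 0 ≤ α) (hk : k ≤ K)
    (hQ : ∀ y ∈ gridCube t k m, ∀ k', k ≤ k' → k' ≤ K →
      gridFracAvg α f t k' (gridIndex t k' y) ≤ s) :
    s * volume (gridCube t k m ∩ {x | s < truncGridFracMax α f t K x}) ≤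
      ENNReal.ofReal ((2 ^ k) ^ α) * ∫⁻ y in gridCube t k m, (‖f y‖₊ : ℝ≥0∞) := by
  set Q := gridCube t k m
  set P := {p : ℤ × (Fin n → ℤ) // IsStoppingCube α f t K s p.1 p.2}
  have hcover : Q ∩ {x | s < truncGridFracMax α f t K x} ⊆ ⋃ p : P, Q ∩ gridCube t p.1.1 p.1.2 := by
    rintro x ⟨hxQ, hx⟩
    rcases setOf_lt_truncGridFracMax_subset α f t K s hx with hx | hx
    · exact absurd (hQ x hxQ K hk le_rfl) (not_le.mpr hx)
    · exact Set.inter_iUnion Q _ ▸ ⟨hxQ, hx⟩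
  have hpiece : ∀ p : P, s * volume (Q ∩ gridCube t p.1.1 p.1.2) ≤
      ENNReal.ofReal ((2 ^ k) ^ α) * ∫⁻ y in Q ∩ gridCube t p.1.1 p.1.2, (‖f y‖₊ : ℝ≥0∞) := by
    rintro ⟨⟨k', m'⟩, hp⟩
    rcases (Q ∩ gridCube t k' m').eq_empty_or_nonempty with hempty | ⟨y, hyQ, hy'⟩
    · simp [hempty]
    have hk' := (hp.lt_of_mem hQ hyQ hy').le
    rw [Set.inter_eq_right.mpr (gridCube_subset_gridCube hk' hy' hyQ)]
    calc s * volume (gridCube t k' m')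
        ≤ gridFracAvg α f t k' m' * volume (gridCube t k' m') := by gcongr; exact hp.2.1.le
      _ ≤ ENNReal.ofReal ((2 ^ k) ^ α) * ∫⁻ y in gridCube t k' m', (‖f y‖₊ : ℝ≥0∞) := by
        rw [gridFracAvg_mul_volume]
        gcongr
        norm_num
  have hdisj : Pairwise (Disjoint on fun p : P => Q ∩ gridCube t p.1.1 p.1.2) :=
    fun p p' hne => ((pairwise_disjoint_stoppingCube α f t K s) hne).mono
      Set.inter_subset_right Set.inter_subset_right
  calc s * volume (Q ∩ {x | s < truncGridFracMax α f t K x})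
      ≤ ∑' p : P, s * volume (Q ∩ gridCube t p.1.1 p.1.2) := by
        rw [ENNReal.tsum_mul_left]
        gcongr
        exact (measure_mono hcover).trans (measure_iUnion_le _)
    _ ≤ ∑' p : P, ENNReal.ofReal ((2 ^ k) ^ α) *
          ∫⁻ y in Q ∩ gridCube t p.1.1 p.1.2, (‖f y‖₊ : ℝ≥0∞) := ENNReal.tsum_le_tsum hpiece
    _ ≤ ENNReal.ofReal ((2 ^ k) ^ α) * ∫⁻ y in Q, (‖f y‖₊ : ℝ≥0∞) := by
        rw [ENNReal.tsum_mul_left, ← lintegral_iUnion (fun p => (measurableSet_gridCube t k m).inter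
          (measurableSet_gridCube t _ _)) hdisj]
        gcongr
        exact Set.iUnion_subset fun _ => Set.inter_subset_left

/-- The average over `Q` is at most `2^n s` because that of its parent is at most `s`; conclude by
the localised weak-type estimate. -/
lemma IsStoppingCube.volume_le (hα : 0 ≤ α) (h : IsStoppingCube α f t K s k m) (hs : s ≠ 0)
    (hs' : s ≠ ⊤) :
    volume (gridCube t k m) ≤
      2 * volume (gridCube t k m \ {x | 2 ^ (n + 1) * s < truncGridFracMax α f t K x}) := by
  set Q := gridCube t k m
  set A := volume (Q ∩ {x | 2 ^ (n + 1) * s < truncGridFracMax α f t K x})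
  set B := volume (Q \ {x | 2 ^ (n + 1) * s < truncGridFracMax α f t K x})
  have hQ : ∀ y ∈ Q, ∀ k', k ≤ k' → k' ≤ K →
      gridFracAvg α f t k' (gridIndex t k' y) ≤ 2 ^ (n + 1) * s := by
    intro y hy k' hkk' hk'K
    rcases hkk'.eq_or_lt with rfl | hlt
    · rw [hy, pow_succ, mul_comm _ 2, mul_assoc]
      exact (h.gridFracAvg_le hα).trans (le_mul_of_one_le_left' one_le_two)
    · exact (h.2.2 y hy k' hlt hk'K).trans (le_mul_of_one_le_left' (one_le_pow₀ one_le_two))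
  have hweak : 2 * (2 ^ n * s) * A ≤ 2 ^ n * s * volume Q :=
    calc 2 * (2 ^ n * s) * A = 2 ^ (n + 1) * s * A := by ring
      _ ≤ ENNReal.ofReal ((2 ^ k) ^ α) * ∫⁻ y in Q, (‖f y‖₊ : ℝ≥0∞) :=
        mul_volume_inter_setOf_lt_le hα h.1.le hQ
      _ = gridFracAvg α f t k m * volume Q := (gridFracAvg_mul_volume α f t k m).symm
      _ ≤ 2 ^ n * s * volume Q := by gcongr; exact h.gridFracAvg_le hα
  have hAQ : 2 * A ≤ volume Q := by
    rw [mul_comm 2 (2 ^ n * s), mul_assoc] at hweak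
    exact (ENNReal.mul_le_mul_iff_right (by simp [hs]) (ENNReal.mul_ne_top (by simp) hs')).mp hweak
  have hsplit : volume Q = A + B :=
    (measure_inter_add_sdiff Q (measurableSet_lt measurable_const
      (measurable_truncGridFracMax α f t K))).symm
  have hA : A ≠ ⊤ :=
    ne_top_of_le_ne_top (volume_gridCube_ne_top t k m) (measure_mono Set.inter_subset_left)
  have hAB : A ≤ B := by
    rw [two_mul, hsplit] at hAQ
    exact (ENNReal.add_le_add_iff_left hA).mp hAQ
  rw [hsplit, two_mul]
  gcongr

end Stopping

/-- The union of the sets `E_Q = Q \ {M > 2^(n+1) 2^j}` over the stopping cubes `Q` for the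
threshold `2^j`: the `j`-th generation of the sparse family. -/
def sparseSet (α : ℝ) (f : EuclideanSpace ℝ (Fin n) → ℝ) (t : Fin n → Bool) (K j : ℤ) :
    Set (EuclideanSpace ℝ (Fin n)) :=
  ⋃ p : {p : ℤ × (Fin n → ℤ) // IsStoppingCube α f t K (2 ^ j) p.1 p.2},
    gridCube t p.1.1 p.1.2 \ {x | 2 ^ (n + 1) * 2 ^ j < truncGridFracMax α f t K x}

section Sparse

variable {α : ℝ} {f : EuclideanSpace ℝ (Fin n) → ℝ} (μ : Measure (EuclideanSpace ℝ (Fin n)))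
  {K : ℤ}

lemma measurableSet_sparseSet (α : ℝ) (f : EuclideanSpace ℝ (Fin n) → ℝ) (t : Fin n → Bool)
    (K j : ℤ) : MeasurableSet (sparseSet α f t K j) :=
  .iUnion fun _ => (measurableSet_gridCube t _ _).diff
    (measurableSet_lt measurable_const (measurable_truncGridFracMax α f t K))

lemma disjoint_sparseSet {j j' : ℤ} (h : j + (n + 1 : ℕ) ≤ j') :
    Disjoint (sparseSet α f t K j) (sparseSet α f t K j') := by
  refine Set.disjoint_left.mpr fun x hx hx' => ?_
  obtain ⟨p, hp⟩ := Set.mem_iUnion.mp hx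
  obtain ⟨p', hp'⟩ := Set.mem_iUnion.mp hx'
  refine hp.2 (show 2 ^ (n + 1) * 2 ^ j < truncGridFracMax α f t K x from
    lt_of_le_of_lt ?_ (p'.2.subset_setOf_lt hp'.1))
  rw [← zpow_natCast, ← ENNReal.zpow_add two_ne_zero ENNReal.ofNat_ne_top, add_comm]
  exact ENNReal.zpow_le_of_le one_le_two h

lemma two_zpow_mul_measure_setOf_lt_le (hα : 0 ≤ α) (t : Fin n → Bool) (K j : ℤ) :
    2 ^ j * μ {x | 2 ^ j < truncGridFracMax α f t K x} ≤
      2 ^ j * μ {x | 2 ^ j < gridFracAvg α f t K (gridIndex t K x)} +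
        2 * ∫⁻ y in sparseSet α f t K j, cubeFracMaxFn n 0 f y * cubeFracMaxMeas n α μ y := by
  set P := {p : ℤ × (Fin n → ℤ) // IsStoppingCube α f t K (2 ^ j) p.1 p.2}
  set E : P → Set (EuclideanSpace ℝ (Fin n)) := fun p =>
    gridCube t p.1.1 p.1.2 \ {x | 2 ^ (n + 1) * 2 ^ j < truncGridFracMax α f t K x}
  have hE : ∀ p, MeasurableSet (E p) := fun _ => (measurableSet_gridCube t _ _).diff
    (measurableSet_lt measurable_const (measurable_truncGridFracMax α f t K))
  have hEdisj : Pairwise (Disjoint on E) := fun p p' hne =>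
    (pairwise_disjoint_stoppingCube α f t K _ hne).mono Set.sdiff_subset Set.sdiff_subset
  have hcube : ∀ p : P, 2 ^ j * μ (gridCube t p.1.1 p.1.2) ≤
      2 * ∫⁻ y in E p, cubeFracMaxFn n 0 f y * cubeFracMaxMeas n α μ y := fun p =>
    (mul_le_mul_left p.2.2.1.le _).trans <| gridFracAvg_mul_measure_le (hE p) Set.sdiff_subset <|
      p.2.volume_le hα (ENNReal.zpow_pos two_ne_zero ENNReal.ofNat_ne_top j).ne'
        (ENNReal.zpow_lt_top two_ne_zero ENNReal.ofNat_ne_top j).ne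
  calc 2 ^ j * μ {x | 2 ^ j < truncGridFracMax α f t K x}
      ≤ 2 ^ j * (μ {x | 2 ^ j < gridFracAvg α f t K (gridIndex t K x)} +
          ∑' p : P, μ (gridCube t p.1.1 p.1.2)) := by
        gcongr
        exact (measure_mono (setOf_lt_truncGridFracMax_subset α f t K _)).trans
          ((measure_union_le _ _).trans (by gcongr; exact measure_iUnion_le _))
    _ ≤ 2 ^ j * μ {x | 2 ^ j < gridFracAvg α f t K (gridIndex t K x)} +
          ∑' p : P, 2 * ∫⁻ y in E p, cubeFracMaxFn n 0 f y * cubeFracMaxMeas n α μ y := by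
        rw [mul_add, ← ENNReal.tsum_mul_left]
        exact add_le_add le_rfl (ENNReal.tsum_le_tsum hcube)
    _ = _ := by rw [ENNReal.tsum_mul_left, ← lintegral_iUnion hE hEdisj, sparseSet]

lemma lintegral_gridFracAvg_gridIndex_le (t : Fin n → Bool) (k : ℤ) :
    ∫⁻ x, gridFracAvg α f t k (gridIndex t k x) ∂μ ≤
      ∫⁻ y, cubeFracMaxFn n 0 f y * cubeFracMaxMeas n α μ y := by
  rw [lintegral_eq_tsum_gridCube μ _ t k, lintegral_eq_tsum_gridCube volume _ t k]
  refine ENNReal.tsum_le_tsum fun m => ?_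
  rw [setLIntegral_congr_fun (measurableSet_gridCube t k m) (g := fun _ => gridFracAvg α f t k m)
    fun x hx => by rw [mem_gridCube.mp hx], setLIntegral_const]
  simpa using gridFracAvg_mul_measure_le (μ := μ) (C := 1) (measurableSet_gridCube t k m)
    subset_rfl (by simp)

lemma lintegral_truncGridFracMax_le (hα : 0 ≤ α) (t : Fin n → Bool) (K : ℤ) :
    ∫⁻ x, truncGridFracMax α f t K x ∂μ ≤
      (2 * n + 4) * ∫⁻ y, cubeFracMaxFn n 0 f y * cubeFracMaxMeas n α μ y := by
  set G := ∫⁻ y, cubeFracMaxFn n 0 f y * cubeFracMaxMeas n α μ y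
  calc ∫⁻ x, truncGridFracMax α f t K x ∂μ
      ≤ ∑' j : ℤ, 2 ^ j * μ {x | 2 ^ j < truncGridFracMax α f t K x} :=
        lintegral_le_tsum_two_zpow_mul_measure (measurable_truncGridFracMax α f t K)
    _ ≤ ∑' j : ℤ, (2 ^ j * μ {x | 2 ^ j < gridFracAvg α f t K (gridIndex t K x)} +
          2 * ∫⁻ y in sparseSet α f t K j, cubeFracMaxFn n 0 f y * cubeFracMaxMeas n α μ y) :=
        ENNReal.tsum_le_tsum fun j => two_zpow_mul_measure_setOf_lt_le μ hα t K j
    _ ≤ 2 * ∫⁻ x, gridFracAvg α f t K (gridIndex t K x) ∂μ + 2 * ((n + 1 : ℕ) * G) := by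
        rw [ENNReal.tsum_add, ENNReal.tsum_mul_left]
        gcongr
        · exact tsum_two_zpow_mul_measure_le (measurable_gridFracAvg_gridIndex α f t K)
        · exact tsum_setLIntegral_le_of_disjoint (n + 1) (measurableSet_sparseSet α f t K)
            (fun _ _ => disjoint_sparseSet) _
    _ ≤ 2 * G + 2 * ((n + 1 : ℕ) * G) := by
        gcongr
        exact lintegral_gridFracAvg_gridIndex_le μ t K
    _ = (2 * n + 4) * G := by push_cast; ring

lemma lintegral_gridFracMax_le (hα : 0 ≤ α) (t : Fin n → Bool) :
    ∫⁻ x, gridFracMax α f t x ∂μ ≤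
      (2 * n + 4) * ∫⁻ y, cubeFracMaxFn n 0 f y * cubeFracMaxMeas n α μ y := by
  simp_rw [gridFracMax_eq_iSup_truncGridFracMax]
  rw [lintegral_iSup (fun K => measurable_truncGridFracMax α f t K)
    fun K K' h => monotone_truncGridFracMax (by exact_mod_cast h)]
  exact iSup_le fun K => lintegral_truncGridFracMax_le μ hα t K

end Sparse

end ShiftedDyadic

open ShiftedDyadic

theorem lintegral_fracMax_le_general (n : ℕ) (α : ℝ) (hα : 0 ≤ α) :
    ∃ C : ℝ≥0∞, 0 < C ∧ C ≠ ⊤ ∧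
      ∀ (μ : Measure (EuclideanSpace ℝ (Fin n))) [IsLocallyFiniteMeasure μ]
        (f : EuclideanSpace ℝ (Fin n) → ℝ), LocallyIntegrable f volume →
        ∫⁻ x, cubeFracMaxFn n α f x ∂μ ≤
          C * ∫⁻ x, cubeFracMaxFn n 0 f x * cubeFracMaxMeas n α μ x := by
  refine ⟨6 ^ n * (2 ^ n * (2 * n + 4)), by positivity, by finiteness, fun μ _ f _ => ?_⟩
  calc ∫⁻ x, cubeFracMaxFn n α f x ∂μ
      ≤ ∫⁻ x, 6 ^ n * ∑ t, gridFracMax α f t x ∂μ :=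
        lintegral_mono (cubeFracMaxFn_le_sum_gridFracMax hα)
    _ = 6 ^ n * ∑ t, ∫⁻ x, gridFracMax α f t x ∂μ := by
        rw [lintegral_const_mul _ (Finset.measurable_sum _ fun t _ => measurable_gridFracMax α f t),
          lintegral_finsetSum _ fun t _ => measurable_gridFracMax α f t]
    _ ≤ 6 ^ n * ∑ _t : Fin n → Bool,
          (2 * n + 4) * ∫⁻ x, cubeFracMaxFn n 0 f x * cubeFracMaxMeas n α μ x := by
        gcongr with t
        exact lintegral_gridFracMax_le μ hα t
    _ = 6 ^ n * (2 ^ n * (2 * n + 4)) *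
          ∫⁻ x, cubeFracMaxFn n 0 f x * cubeFracMaxMeas n α μ x := by
        simp only [Finset.sum_const, Finset.card_univ, Fintype.card_fun, Fintype.card_bool,
          Fintype.card_fin, nsmul_eq_mul]
        push_cast
        ring

/-- Endpoint estimate `∫ M_α f dμ ≤ C ∫ Mf · M_α μ dx`. -/
theorem lintegral_fracMax_le (n : ℕ) (α : ℝ) (hα : 0 ≤ α) (hαn : α < n) :
    ∃ C : ℝ≥0∞, 0 < C ∧ C ≠ ⊤ ∧
      ∀ (μ : Measure (EuclideanSpace ℝ (Fin n))) [IsLocallyFiniteMeasure μ]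
        (f : EuclideanSpace ℝ (Fin n) → ℝ), LocallyIntegrable f volume →
        ∫⁻ x, cubeFracMaxFn n α f x ∂μ ≤
          C * ∫⁻ x, cubeFracMaxFn n 0 f x * cubeFracMaxMeas n α μ x :=
  lintegral_fracMax_le_general n α hα
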